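/- For multiplicatively dependent bases b and c (i.e., b^k = c^l for some positive integers k, l), every b-recognisable set of natural numbers is c-recognisable. -/

import Mathlib

/-!
A set `E` is `b`-recognisable iff its `b`-kernel, the family of sets `{n | r + b ^ j * n ∈ E}`
with `r < b ^ j`, is finite: by Myhill–Nerode, the left quotient of the language of
representations by a word of length `j` and value `r` is, up to the empty word, the set of
representations of the kernel set for `(j, r)`. Since `c ^ l = b ^ k`, the `c ^ l`-kernel is part
of the `b`-kernel, and every set in the `c`-kernel is obtained from one in the `c ^ l`-kernel by
one of the finitely many shifts `n ↦ r' + c ^ s * n` with `s < l` and `r' < c ^ s`.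
-/

/-- Value of a word of digits, read least-significant-digit-first. -/
def wordVal (b : ℕ) : List ℕ → ℕ
  | [] => 0
  | a :: u => a + b * wordVal b u

/-- A language is regular if it is accepted by a DFA with finitely many states. -/
def IsRegularLang {α : Type} (L : Language α) : Prop :=
  ∃ (σ : Type) (_ : Fintype σ) (M : DFA α σ), M.accepts = L

/-- A set `E ⊆ ℕ` is `b`-recognisable if the language of base-`b`
representations of its elements (least-significant-digit-first words over
`{0,…,b-1}` not ending with `0`) is regular. -/
def BRecognisable (b : ℕ) (E : Set ℕ) : Prop :=
  IsRegularLang {w : List ℕ |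
    (∀ d ∈ w, d < b) ∧ wordVal b w ∈ E ∧ w.getLast? ≠ some 0}

theorem wordVal_eq_ofDigits (b : ℕ) : ∀ w : List ℕ, wordVal b w = Nat.ofDigits b w
  | [] => rfl
  | a :: w => by rw [wordVal, Nat.ofDigits_cons, wordVal_eq_ofDigits b w]

def baseLang (b : ℕ) (E : Set ℕ) : Language ℕ :=
  {w | (∀ d ∈ w, d < b) ∧ wordVal b w ∈ E ∧ w.getLast? ≠ some 0}

def baseKernel (b : ℕ) (E : Set ℕ) : Set (Set ℕ) :=
  {S | ∃ j r, r < b ^ j ∧ S = {n | r + b ^ j * n ∈ E}}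

section

variable {b : ℕ} {E : Set ℕ}

theorem mem_baseLang {w : List ℕ} :
    w ∈ baseLang b E ↔ (∀ d ∈ w, d < b) ∧ Nat.ofDigits b w ∈ E ∧ w.getLast? ≠ some 0 := by
  rw [← wordVal_eq_ofDigits]
  rfl

theorem digits_mem_baseLang (hb : 1 < b) {n : ℕ} : Nat.digits b n ∈ baseLang b E ↔ n ∈ E := by
  rw [mem_baseLang, Nat.ofDigits_digits]
  refine ⟨fun h => h.2.1, fun h => ⟨fun _ => Nat.digits_lt_base hb, h, ?_⟩⟩
  rcases eq_or_ne n 0 with rfl | hn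
  · simp
  · rw [List.getLast?_eq_some_getLast (Nat.digits_ne_nil_iff_ne_zero.mpr hn)]
    simpa using Nat.getLast_digit_ne_zero b hn

theorem append_mem_baseLang_iff {u v : List ℕ} (hu : ∀ d ∈ u, d < b) (hv : v ≠ []) :
    u ++ v ∈ baseLang b E ↔ v ∈ baseLang b {n | Nat.ofDigits b u + b ^ u.length * n ∈ E} := by
  simp only [mem_baseLang, List.forall_mem_append, Nat.ofDigits_append,
    List.getLast?_append_of_ne_nil _ hv, Set.mem_ofPred_eq, iff_true_intro hu, true_and]

theorem exists_digits_length_eq_of_lt_pow (hb : 0 < b) :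
    ∀ {j r : ℕ}, r < b ^ j →
      ∃ u : List ℕ, u.length = j ∧ (∀ d ∈ u, d < b) ∧ Nat.ofDigits b u = r
  | 0, r, hr => ⟨[], rfl, by simp, by simp at hr ⊢; omega⟩
  | j + 1, r, hr => by
    have hrb : r / b < b ^ j := Nat.div_lt_of_lt_mul (by rwa [mul_comm, ← pow_succ])
    obtain ⟨u, hlen, hu, hval⟩ := exists_digits_length_eq_of_lt_pow hb hrb
    refine ⟨r % b :: u, by simp [hlen], ?_, by rw [Nat.ofDigits_cons, hval, Nat.mod_add_div]⟩
    simpa [Nat.mod_lt _ hb] using hu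

theorem finite_baseKernel (hb : 1 < b) (hE : BRecognisable b E) :
    (baseKernel b E).Finite := by
  have hQ : (Set.range (baseLang b E).leftQuotient).Finite :=
    Language.IsRegular.finite_range_leftQuotient hE
  refine ((hQ.prod (Set.finite_univ (α := Prop))).image fun p : Language ℕ × Prop =>
    {n | n = 0 ∧ p.2 ∨ n ≠ 0 ∧ Nat.digits b n ∈ p.1}).subset ?_
  rintro _ ⟨j, r, hr, rfl⟩
  obtain ⟨u, rfl, hu, rfl⟩ := exists_digits_length_eq_of_lt_pow (by omega) hr
  refine ⟨((baseLang b E).leftQuotient u, Nat.ofDigits b u ∈ E), ⟨⟨u, rfl⟩, trivial⟩, ?_⟩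
  ext n
  rcases eq_or_ne n 0 with rfl | hn
  · simp
  · simp [hn, append_mem_baseLang_iff hu (Nat.digits_ne_nil_iff_ne_zero.mpr hn),
      digits_mem_baseLang hb]

theorem baseKernel_pow_subset (k : ℕ) : baseKernel (b ^ k) E ⊆ baseKernel b E := by
  rintro _ ⟨j, r, hr, rfl⟩
  exact ⟨k * j, r, by rwa [pow_mul], by rw [pow_mul]⟩

theorem finite_baseKernel_of_pow {l : ℕ} (hb : 0 < b) (hl : 0 < l)
    (h : (baseKernel (b ^ l) E).Finite) : (baseKernel b E).Finite := by
  have hshifts : (Set.Iio (b ^ l) ×ˢ Set.Iio l).Finite := (Set.finite_Iio _).prod (Set.finite_Iio _)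
  refine ((h.prod hshifts).image fun p : Set ℕ × ℕ × ℕ =>
    {n | p.2.1 + b ^ p.2.2 * n ∈ p.1}).subset ?_
  rintro _ ⟨j, r, hr, rfl⟩
  have hbj : b ^ j = (b ^ l) ^ (j / l) * b ^ (j % l) := by
    rw [← pow_mul, ← pow_add, Nat.div_add_mod]
  set A := (b ^ l) ^ (j / l)
  have hA : 0 < A := pow_pos (pow_pos hb l) _
  have hs : j % l < l := Nat.mod_lt _ hl
  have hq : r / A < b ^ (j % l) := Nat.div_lt_of_lt_mul (hbj ▸ hr)
  refine ⟨({m | r % A + A * m ∈ E}, r / A, j % l), ⟨⟨j / l, r % A, Nat.mod_lt _ hA, rfl⟩,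
    hq.trans_le (Nat.pow_le_pow_right hb hs.le), hs⟩, ?_⟩
  ext n
  -- `r + b ^ j * n = r % A + A * (r / A + b ^ (j % l) * n)`
  simp only [Set.mem_ofPred_eq]
  rw [hbj, mul_assoc, mul_add, ← add_assoc, Nat.mod_add_div]

theorem brecognisable_of_finite_baseKernel (hb : 1 < b)
    (hK : (baseKernel b E).Finite) : BRecognisable b E := by
  refine Language.IsRegular.of_finite_range_leftQuotient (L := baseLang b E) <|
    (((hK.prod (Set.finite_univ (α := Prop))).image fun p : Set ℕ × Prop =>
      ({v | v = [] ∧ p.2 ∨ v ≠ [] ∧ v ∈ baseLang b p.1} : Language ℕ)).insert ∅).subset ?_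
  rintro _ ⟨u, rfl⟩
  by_cases hu : ∀ d ∈ u, d < b
  · refine Or.inr ⟨({n | Nat.ofDigits b u + b ^ u.length * n ∈ E}, u ∈ baseLang b E),
      ⟨⟨_, _, Nat.ofDigits_lt_base_pow_length hb hu, rfl⟩, trivial⟩, ?_⟩
    refine Language.ext fun v => ?_
    rw [Language.mem_leftQuotient]
    change _ ∨ _ ↔ _
    rcases eq_or_ne v [] with rfl | hv
    · simp
    · simp [hv, append_mem_baseLang_iff hu hv]
  · refine Or.inl (Set.eq_empty_of_forall_notMem fun v hv => hu fun d hd => ?_)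
    exact (mem_baseLang.mp hv).1 d (List.mem_append_left v hd)

end

theorem brecognisable_of_mult_dependent_general (b c k l : ℕ) (hb : 2 ≤ b) (hc : 2 ≤ c)
    (hl : 1 ≤ l) (hdep : b ^ k = c ^ l)
    (E : Set ℕ) (hE : BRecognisable b E) : BRecognisable c E := by
  have hKb : (baseKernel b E).Finite := finite_baseKernel hb hE
  have hKcl : (baseKernel (c ^ l) E).Finite := hdep ▸ hKb.subset (baseKernel_pow_subset k)
  exact brecognisable_of_finite_baseKernel hc (finite_baseKernel_of_pow (by omega) hl hKcl)

/-- For multiplicatively dependent bases `b` and `c` (`b^k = c^l` with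
`k, l ≥ 1`), every `b`-recognisable set is `c`-recognisable. -/
theorem brecognisable_of_mult_dependent (b c k l : ℕ) (hb : 2 ≤ b) (hc : 2 ≤ c)
    (hk : 1 ≤ k) (hl : 1 ≤ l) (hdep : b ^ k = c ^ l)
    (E : Set ℕ) (hE : BRecognisable b E) : BRecognisable c E :=
  brecognisable_of_mult_dependent_general b c k l hb hc hl hdep E hE
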